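/- Let G be a finitely generated group, p a prime, I a nonempty totally ordered set, and (N_i)_{i ∈ I} a family of normal subgroups of G with N_i ⊆ N_j whenever i ≤ j. Let N = ⋃_{i ∈ I} N_i. Then limsup_{i ∈ I} RG_p(G/N_i) ≤ RG_p(G/N), where the limsup is taken along the atTop filter on I. -/

import Mathlib

/-- `dGen G` is the minimal number of generators of the group `G`. -/
noncomputable def dGen (G : Type*) [Group G] : ℕ :=
  sInf {n : ℕ | ∃ S : Finset G, S.card = n ∧ Subgroup.closure (S : Set G) = ⊤}

/-- The rank gradient of `G`. -/
noncomputable def rankGradient (G : Type*) [Group G] : ℝ :=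
  sInf {r : ℝ | ∃ H : Subgroup G, H.index ≠ 0 ∧ r = ((dGen H : ℝ) - 1) / (H.index : ℝ)}

open scoped commutatorElement

/-- The subgroup `[G,G]G^p` of `G` (as a normal closure of its generators). -/
def pCommPow (p : ℕ) (G : Type*) [Group G] : Subgroup G :=
  Subgroup.normalClosure ({x | ∃ a b : G, x = ⁅a, b⁆} ∪ {x | ∃ g : G, x = g ^ p})

instance pCommPow_normal (p : ℕ) (G : Type*) [Group G] : (pCommPow p G).Normal :=
  Subgroup.normalClosure_normal

/-- `d_p(G) = d(G/([G,G]G^p))`. -/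
noncomputable def dp (p : ℕ) (G : Type*) [Group G] : ℕ :=
  dGen (G ⧸ pCommPow p G)

/-- The `p`-gradient of `G`. -/
noncomputable def pGradient (p : ℕ) (G : Type*) [Group G] : ℝ :=
  sInf {r : ℝ | ∃ H : Subgroup G, H.Normal ∧ (∃ k : ℕ, H.index = p ^ k) ∧
    r = ((dp p H : ℝ) - 1) / (H.index : ℝ)}

/-- The `p`-residual: intersection of all normal subgroups of `p`-power index. -/
def pResidual (p : ℕ) (G : Type*) [Group G] : Subgroup G :=
  ⨅ H ∈ {H : Subgroup G | H.Normal ∧ ∃ k : ℕ, H.index = p ^ k}, H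

instance pResidual_normal (p : ℕ) (G : Type*) [Group G] : (pResidual p G).Normal := by
  constructor
  intro n hn g
  simp only [pResidual, Subgroup.mem_iInf] at hn ⊢
  intro H hH
  exact hH.1.conj_mem n (hn H hH) g

/-! Pull a normal subgroup `H` of `p`-power index of `G ⧸ N` back to `M ≤ G`. Its images
`Hᵢ` in `G ⧸ Nᵢ` are normal of the same index, and `d_p(Hᵢ) = d(M ⧸ Φ_p(M) (Nᵢ ∩ M))`, where
`Φ_p(M) = [M,M]M^p`. Lifting a minimal generating set of `M ⧸ Φ_p(M) (N ∩ M)` to `M` gives a finite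
set which, together with `Φ_p(M) (Nᵢ ∩ M)`, generates `M` as soon as `i` is large, because `M` is
finitely generated and the `Nᵢ` increase to `N`. Hence eventually `d_p(Hᵢ) ≤ d_p(H)`, so
eventually `RG_p(G ⧸ Nᵢ) ≤ (d_p(H) - 1) / [G ⧸ N : H]`. -/

open Subgroup QuotientGroup

section dGen

variable {G H : Type*} [Group G] [Group H]

lemma dGen_le_card {S : Finset G} (hS : closure (S : Set G) = ⊤) : dGen G ≤ S.card :=
  Nat.sInf_le ⟨S, rfl, hS⟩

lemma dGen_eq_rank [Group.FG G] : dGen G = Group.rank G := by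
  obtain ⟨S, hcard, hS⟩ := Group.rank_spec G
  obtain ⟨T, hT, hTtop⟩ :
      dGen G ∈ {n | ∃ S : Finset G, S.card = n ∧ closure (S : Set G) = ⊤} :=
    Nat.sInf_mem ⟨_, S, rfl, hS⟩
  exact le_antisymm (hcard ▸ dGen_le_card hS) (hT ▸ Group.rank_le hTtop)

lemma exists_finset_closure_eq_top_of_mulEquiv (e : G ≃* H) {n : ℕ} :
    (∃ S : Finset G, S.card = n ∧ closure (S : Set G) = ⊤) →
      ∃ S : Finset H, S.card = n ∧ closure (S : Set H) = ⊤ := by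
  rintro ⟨S, rfl, hS⟩
  refine ⟨S.map e.toEquiv.toEmbedding, Finset.card_map _, ?_⟩
  rw [Finset.coe_map]
  exact (MonoidHom.map_closure e.toMonoidHom _).symm.trans
    (by rw [hS, map_top_of_surjective _ e.surjective])

lemma dGen_congr (e : G ≃* H) : dGen G = dGen H := by
  unfold dGen
  congr 1
  ext n
  exact ⟨exists_finset_closure_eq_top_of_mulEquiv e,
    exists_finset_closure_eq_top_of_mulEquiv e.symm⟩

lemma map_mk'_eq_top_iff {K : Subgroup G} [K.Normal] {X : Subgroup G} :
    X.map (mk' K) = ⊤ ↔ X ⊔ K = ⊤ := by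
  have hcomap : (X.map (mk' K)).comap (mk' K) = X ⊔ K := by rw [comap_map_eq, ker_mk']
  constructor
  · intro hX
    rw [← hcomap, hX, Subgroup.comap_top]
  · intro hX
    rw [← map_comap_eq_self_of_surjective (mk'_surjective K) (X.map _), hcomap, hX,
      map_top_of_surjective _ (mk'_surjective K)]

lemma dGen_quotient_le_card {K : Subgroup G} [K.Normal] {S : Finset G}
    (hS : closure (S : Set G) ⊔ K = ⊤) : dGen (G ⧸ K) ≤ S.card := by
  classical
  calc dGen (G ⧸ K) ≤ (S.image (mk' K)).card :=
        dGen_le_card <| by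
          rw [Finset.coe_image, ← MonoidHom.map_closure, map_mk'_eq_top_iff, hS]
    _ ≤ S.card := Finset.card_image_le

lemma exists_finset_card_le_dGen_quotient [Group.FG G] (K : Subgroup G) [K.Normal] :
    ∃ S : Finset G, S.card ≤ dGen (G ⧸ K) ∧ closure (S : Set G) ⊔ K = ⊤ := by
  classical
  have : Group.FG (G ⧸ K) := Group.fg_of_surjective (mk'_surjective K)
  obtain ⟨S, hcard, hS⟩ := Group.rank_spec (G ⧸ K)
  refine ⟨S.image Quotient.out,
    dGen_eq_rank (G := G ⧸ K) ▸ hcard ▸ Finset.card_image_le, ?_⟩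
  rw [← map_mk'_eq_top_iff, MonoidHom.map_closure, Finset.coe_image, ← Set.image_comp]
  rwa [show mk' K ∘ Quotient.out = id from funext out_eq', Set.image_id]

lemma Group.exists_eq_top_of_directed_iSup_eq_top [Group.FG G] {ι : Type*} [Nonempty ι]
    {K : ι → Subgroup G} (hK : Directed (· ≤ ·) K) (htop : ⨆ i, K i = ⊤) : ∃ i, K i = ⊤ := by
  classical
  obtain ⟨S, hS⟩ := Group.FG.out (G := G)
  have hmem (s : G) : ∃ i, s ∈ K i := (mem_iSup_of_directed hK).1 (htop ▸ mem_top s)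
  choose idx hidx using hmem
  obtain ⟨i, hi⟩ := hK.finset_le (S.image idx)
  refine ⟨i, eq_top_iff.2 (hS ▸ (closure_le _).2 fun s hs => ?_)⟩
  exact hi _ (Finset.mem_image_of_mem _ hs) (hidx s)

lemma eventually_dGen_quotient_le [Group.FG G] {ι : Type*} [Preorder ι] [IsDirected ι (· ≤ ·)]
    [Nonempty ι] (K : ι → Subgroup G) [∀ i, (K i).Normal] (hK : Monotone K) (L : Subgroup G)
    [L.Normal] (hL : L ≤ ⨆ i, K i) :
    ∀ᶠ i in Filter.atTop, dGen (G ⧸ K i) ≤ dGen (G ⧸ L) := by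
  obtain ⟨S, hcard, hS⟩ := exists_finset_card_le_dGen_quotient L
  have htop : ⨆ i, closure (S : Set G) ⊔ K i = ⊤ := by
    rw [eq_top_iff, ← hS]
    exact (sup_le_sup_left hL _).trans sup_iSup.le
  obtain ⟨i, hi⟩ := Group.exists_eq_top_of_directed_iSup_eq_top
    (monotone_const.sup hK).directed_le htop
  filter_upwards [Filter.eventually_ge_atTop i] with j hj
  exact (dGen_quotient_le_card (top_unique (hi ▸ sup_le_sup_left (hK hj) _))).trans hcard

end dGen

section dp

variable (p : ℕ) {G H : Type*} [Group G] [Group H]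

lemma map_pCommPow {f : G →* H} (hf : Function.Surjective f) :
    (pCommPow p G).map f = pCommPow p H := by
  have hcomm : f '' {x | ∃ a b : G, x = ⁅a, b⁆} = {x | ∃ a b : H, x = ⁅a, b⁆} := by
    ext x
    constructor
    · rintro ⟨_, ⟨a, b, rfl⟩, rfl⟩
      exact ⟨f a, f b, map_commutatorElement f a b⟩
    · rintro ⟨a, b, rfl⟩
      obtain ⟨a, rfl⟩ := hf a
      obtain ⟨b, rfl⟩ := hf b
      exact ⟨_, ⟨a, b, rfl⟩, map_commutatorElement f a b⟩
  have hpow : f '' {x | ∃ g : G, x = g ^ p} = {x | ∃ g : H, x = g ^ p} := by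
    ext x
    constructor
    · rintro ⟨_, ⟨g, rfl⟩, rfl⟩
      exact ⟨f g, map_pow f g p⟩
    · rintro ⟨g, rfl⟩
      obtain ⟨g, rfl⟩ := hf g
      exact ⟨_, ⟨g, rfl⟩, map_pow f g p⟩
  rw [pCommPow, pCommPow, map_normalClosure _ _ hf, Set.image_union, hcomm, hpow]

lemma dp_congr (e : G ≃* H) : dp p G = dp p H :=
  dGen_congr (QuotientGroup.congr _ _ e (map_pCommPow p e.surjective))

lemma dp_quotient (K : Subgroup G) [K.Normal] :
    dp p (G ⧸ K) = dGen (G ⧸ (pCommPow p G ⊔ K)) := by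
  have hmap : (pCommPow p G ⊔ K).map (mk' K) = pCommPow p (G ⧸ K) := by
    rw [Subgroup.map_sup, map_pCommPow p (mk'_surjective K), map_mk'_self, sup_bot_eq]
  exact dGen_congr ((quotientMulEquivOfEq hmap.symm).trans
    (quotientQuotientEquivQuotient K _ le_sup_right))

lemma dp_map_mk' (M K : Subgroup G) [K.Normal] :
    dp p (M.map (mk' K)) = dGen (M ⧸ (pCommPow p M ⊔ K.subgroupOf M)) := by
  rw [← dp_quotient]
  exact dp_congr p <| (MulEquiv.subgroupCongr ((mk' K).domRestrict_range M)).symm.trans <|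
    (quotientKerEquivRange _).symm.trans
      (quotientMulEquivOfEq (by rw [MonoidHom.ker_domRestrict, ker_mk']))

lemma eventually_dp_map_mk'_le [Group.FG G] {ι : Type*} [Preorder ι] [IsDirected ι (· ≤ ·)]
    [Nonempty ι] (M : Subgroup G) [M.FiniteIndex] (K : ι → Subgroup G) [∀ i, (K i).Normal]
    (hK : Monotone K) (L : Subgroup G) [L.Normal] (hL : (L : Set G) ⊆ ⋃ i, K i) :
    ∀ᶠ i in Filter.atTop, dp p (M.map (mk' (K i))) ≤ dp p (M.map (mk' L)) := by
  have : Group.FG M := M.fg_of_index_ne_zero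
  simp only [dp_map_mk']
  refine eventually_dGen_quotient_le _
    (fun i j hij => sup_le_sup_left (subgroupOf_mono M (hK hij)) _) _ ?_
  refine sup_le (le_iSup_of_le (Classical.arbitrary ι) le_sup_left) fun x hx => ?_
  obtain ⟨i, hi⟩ := Set.mem_iUnion.1 (hL (mem_subgroupOf.1 hx))
  exact mem_iSup_of_mem i (mem_sup_right (mem_subgroupOf.2 hi))

end dp

section pGradient

variable (p : ℕ) {G : Type*} [Group G]

lemma neg_one_le_sub_one_div (a n : ℕ) : -1 ≤ ((a : ℝ) - 1) / n := by
  rcases n.eq_zero_or_pos with rfl | hn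
  · simp
  · have hn' : (1 : ℝ) ≤ n := by exact_mod_cast hn
    rw [le_div_iff₀ (by positivity)]
    linarith [a.cast_nonneg (α := ℝ)]

lemma pGradient_le {H : Subgroup G} (hH : H.Normal) (hk : ∃ k, H.index = p ^ k) :
    pGradient p G ≤ ((dp p H : ℝ) - 1) / H.index :=
  csInf_le ⟨-1, by rintro _ ⟨H, -, -, rfl⟩; exact neg_one_le_sub_one_div _ _⟩ ⟨H, hH, hk, rfl⟩

lemma le_pGradient {r : ℝ} (h : ∀ H : Subgroup G, H.Normal → (∃ k, H.index = p ^ k) →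
    r ≤ ((dp p H : ℝ) - 1) / H.index) : r ≤ pGradient p G :=
  le_csInf ⟨_, ⊤, inferInstance, ⟨0, by rw [index_top, pow_zero]⟩, rfl⟩
    (by rintro _ ⟨H, hH, hk, rfl⟩; exact h H hH hk)

lemma neg_one_le_pGradient : -1 ≤ pGradient p G :=
  le_pGradient p fun _ _ _ => neg_one_le_sub_one_div _ _

lemma eventually_pGradient_quotient_le [Group.FG G] {ι : Type*} [Preorder ι]
    [IsDirected ι (· ≤ ·)] [Nonempty ι] {M : Subgroup G} (hM : M.Normal)
    (hk : ∃ k, M.index = p ^ k) (K : ι → Subgroup G) [∀ i, (K i).Normal] (hK : Monotone K)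
    (L : Subgroup G) [L.Normal] (hL : (L : Set G) = ⋃ i, K i) (hLM : L ≤ M) :
    ∀ᶠ i in Filter.atTop, pGradient p (G ⧸ K i) ≤ ((dp p (M.map (mk' L)) : ℝ) - 1) / M.index := by
  have hindex (i : ι) : (M.map (mk' (K i))).index = M.index := by
    refine index_map_eq M (mk'_surjective _) ((ker_mk' (K i)).trans_le (le_trans ?_ hLM))
    rw [← SetLike.coe_subset_coe, hL]
    exact Set.subset_iUnion (fun i => (K i : Set G)) i
  have hvalue : ∀ᶠ i in Filter.atTop, ((dp p (M.map (mk' (K i))) : ℝ) - 1) / M.index ≤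
      ((dp p (M.map (mk' L)) : ℝ) - 1) / M.index := by
    rcases eq_or_ne M.index 0 with h | h
    · -- infinite index: both sides are `x / 0 = 0`
      simp [h]
    · have : M.FiniteIndex := ⟨h⟩
      filter_upwards [eventually_dp_map_mk'_le p M K hK L hL.subset] with i hi
      gcongr
  filter_upwards [hvalue] with i hi
  exact (pGradient_le p (hM.map _ (mk'_surjective _)) (hindex i ▸ hk)).trans (hindex i ▸ hi)

end pGradient

theorem limsup_pGradient_le_general (G : Type*) [Group G] [Group.FG G] (p : ℕ)
    (I : Type*) [LinearOrder I] (Nf : I → Subgroup G) [hNf : ∀ i, (Nf i).Normal]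
    (hmono : ∀ i j : I, i ≤ j → Nf i ≤ Nf j)
    (N : Subgroup G) [hN : N.Normal] (hNU : (N : Set G) = ⋃ i, (Nf i : Set G))
    [Nonempty I] :
    Filter.limsup (fun i => pGradient p (G ⧸ Nf i)) Filter.atTop
      ≤ pGradient p (G ⧸ N) := by
  refine le_pGradient p fun H hH hk => ?_
  obtain ⟨M, hM, hNM, rfl⟩ : ∃ M : Subgroup G, M.Normal ∧ N ≤ M ∧ M.map (mk' N) = H :=
    ⟨H.comap (mk' N), hH.comap _, le_comap_mk' N H,
      map_comap_eq_self_of_surjective (mk'_surjective N) H⟩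
  rw [index_map_eq M (mk'_surjective N) (by rwa [ker_mk'])] at hk ⊢
  exact Filter.limsup_le_of_le
    (Filter.isBoundedUnder_of ⟨-1, fun i => neg_one_le_pGradient p⟩).isCoboundedUnder_le
    (eventually_pGradient_quotient_le p hM hk Nf (fun i j => hmono i j) N hNU hNM)

/-- `limsup_i RG_p(G/N_i) ≤ RG_p(G/N)` along `atTop`. -/
theorem limsup_pGradient_le (G : Type*) [Group G] [Group.FG G] (p : ℕ) (hp : p.Prime)
    (I : Type*) [LinearOrder I] (Nf : I → Subgroup G) [hNf : ∀ i, (Nf i).Normal]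
    (hmono : ∀ i j : I, i ≤ j → Nf i ≤ Nf j)
    (N : Subgroup G) [hN : N.Normal] (hNU : (N : Set G) = ⋃ i, (Nf i : Set G))
    [Nonempty I] :
    Filter.limsup (fun i => pGradient p (G ⧸ Nf i)) Filter.atTop
      ≤ pGradient p (G ⧸ N) :=
  limsup_pGradient_le_general G p I Nf (hNf := hNf) hmono N (hN := hN) hNU
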